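/- arXiv:2506.16365 — 3 statements merged into one kernel-verified Lean document; each statement's English description precedes it below -/
import Mathlib

section
/- Let U be a complex Hilbert space, δ₀ > 0, and let φ : U → U be the symmetric saturation function defined by φ(u) = u if ‖u‖ ≤ δ₀ and φ(u) = (δ₀/‖u‖)·u if ‖u‖ > δ₀. Let κ > 0 and 0 < δ < δ₀. Then for all e, u ∈ U with ‖u‖ ≤ δ₀ − δ, we have Re⟨e, φ(u − κe) − u⟩ ≤ − κδ‖e‖² / max{δ₀, ‖u − κe‖}. -/
open scoped InnerProductSpace ComplexConjugate

/-- Lemma 3.8: for the symmetric saturation function `φ` of radius `δ₀`,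
`Re⟨e, φ(u − κe) − u⟩ ≤ − κδ‖e‖² / max{δ₀, ‖u − κe‖}` whenever `‖u‖ ≤ δ₀ − δ`. -/
theorem saturation_inner_estimate
    {U : Type*} [NormedAddCommGroup U] [InnerProductSpace ℂ U]
    (δ₀ : ℝ) (hδ₀ : 0 < δ₀)
    (φ : U → U)
    (hφ : ∀ u : U, φ u = if ‖u‖ ≤ δ₀ then u else (δ₀ / ‖u‖) • u)
    (κ : ℝ) (hκ : 0 < κ) (δ : ℝ) (hδ : 0 < δ) (hδδ₀ : δ < δ₀)
    (e u : U) (hu : ‖u‖ ≤ δ₀ - δ) :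
    (⟪e, φ (u - κ • e) - u⟫_ℂ).re ≤
      -(κ * δ * ‖e‖ ^ 2) / max δ₀ ‖u - κ • e‖ := by
  set v := u - κ • e with hv
  set m := max δ₀ ‖v‖ with hmdef
  have hδ₀m : δ₀ ≤ m := le_max_left _ _
  have hm : 0 < m := lt_of_lt_of_le hδ₀ hδ₀m
  -- φ v = (δ₀ / m) • v
  have hφv : φ v = (δ₀ / m) • v := by
    rw [hφ]
    split_ifs with h
    · have : m = δ₀ := max_eq_left h
      rw [this, div_self (ne_of_gt hδ₀), one_smul]
    · have : m = ‖v‖ := max_eq_right (le_of_not_ge h)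
      rw [this]
  -- bound on m
  have hvn : ‖v‖ ≤ ‖u‖ + κ * ‖e‖ := by
    calc ‖v‖ ≤ ‖u‖ + ‖κ • e‖ := norm_sub_le _ _
    _ = ‖u‖ + κ * ‖e‖ := by rw [norm_smul, Real.norm_of_nonneg hκ.le]
  have hmb : m - δ₀ ≤ κ * ‖e‖ := by
    have h1 : ‖v‖ ≤ δ₀ + κ * ‖e‖ := by nlinarith [norm_nonneg e]
    have h2 : δ₀ ≤ δ₀ + κ * ‖e‖ := by nlinarith [norm_nonneg e]
    have := max_le h2 h1
    linarith
  set r : ℝ := (⟪e, u⟫_ℂ).re with hrdef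
  have hre : (⟪e, φ v - u⟫_ℂ).re = (δ₀ / m) * (r - κ * ‖e‖ ^ 2) - r := by
    rw [hφv, hv, ← Complex.coe_smul]
    simp only [inner_sub_right, inner_smul_right, ← Complex.coe_smul,
      Complex.sub_re, Complex.mul_re, Complex.ofReal_re, Complex.ofReal_im,
      inner_self_eq_norm_sq, inner_self_im]
    have hee : (⟪e, e⟫_ℂ).re = ‖e‖ ^ 2 := inner_self_eq_norm_sq (𝕜 := ℂ) e
    rw [hee, hrdef]
    ring
  rw [hre]
  -- inner bound
  have hrabs : -r ≤ ‖e‖ * (δ₀ - δ) := by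
    have h1 : ‖⟪e, u⟫_ℂ‖ ≤ ‖e‖ * ‖u‖ := norm_inner_le_norm e u
    have h2 : |r| ≤ ‖⟪e, u⟫_ℂ‖ := Complex.abs_re_le_norm _
    have h3 : -r ≤ |r| := neg_le_abs r
    nlinarith [norm_nonneg e]
  have key : δ₀ * (r - κ * ‖e‖ ^ 2) - r * m ≤ -(κ * δ * ‖e‖ ^ 2) := by
    nlinarith [mul_nonneg (sub_nonneg.2 hδ₀m) (by linarith : (0:ℝ) ≤ ‖e‖ * (δ₀ - δ) + r),
      mul_nonneg (by linarith : (0:ℝ) ≤ κ * ‖e‖ - (m - δ₀))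
        (mul_nonneg (norm_nonneg e) (by linarith : (0:ℝ) ≤ δ₀ - δ))]
  have heq : (δ₀ / m) * (r - κ * ‖e‖ ^ 2) - r
      = (δ₀ * (r - κ * ‖e‖ ^ 2) - r * m) / m := by
    field_simp
  rw [heq]
  exact div_le_div_of_nonneg_right key hm.le |>.trans_eq rfl
end

section
/- Let U be a complex Hilbert space, δ₀ > 0, r ∈ U with ‖r‖ < δ₀, and let φ : U → U be the shifted saturation function φ(u) = r + (δ₀/max{δ₀, ‖u − r‖})·(u − r). Then for every ε with 0 < ε < δ₀ − ‖r‖, one has Re⟨φ(u), u⟩ ≥ ε‖u‖² / max{δ₀, ‖r − u‖} for all u ∈ U. -/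
open scoped InnerProductSpace

/-- For the shifted saturation function `φ` centered at `r` with `‖r‖ < δ₀`,
`Re⟨φ(u), u⟩ ≥ ε‖u‖² / max{δ₀, ‖r − u‖}` for every `0 < ε < δ₀ − ‖r‖`. -/
theorem shifted_saturation_coercive
    {U : Type*} [NormedAddCommGroup U] [InnerProductSpace ℂ U]
    (δ₀ : ℝ) (hδ₀ : 0 < δ₀) (r : U) (hr : ‖r‖ < δ₀)
    (φ : U → U)
    (hφ : ∀ u : U, φ u = r + (δ₀ / max δ₀ ‖u - r‖) • (u - r))
    (ε : ℝ) (hε : 0 < ε) (hε' : ε < δ₀ - ‖r‖) :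
    ∀ u : U, ε * ‖u‖ ^ 2 / max δ₀ ‖r - u‖ ≤ (⟪φ u, u⟫_ℂ).re := by
  intro u
  have hM : δ₀ ≤ max δ₀ ‖r - u‖ := le_max_left _ _
  have hMpos : (0:ℝ) < max δ₀ ‖r - u‖ := lt_of_lt_of_le hδ₀ hM
  set M := max δ₀ ‖r - u‖ with hMdef
  have hnorm : ‖u - r‖ = ‖r - u‖ := norm_sub_rev _ _
  have hre : (⟪φ u, u⟫_ℂ).re
      = (δ₀ / M) * ‖u‖ ^ 2 + (1 - δ₀ / M) * (⟪r, u⟫_ℂ).re := by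
    rw [hφ u, hnorm]
    rw [← Complex.coe_smul]
    rw [inner_add_left, inner_smul_left, inner_sub_left]
    have hself : (⟪u, u⟫_ℂ).re = ‖u‖ ^ 2 := inner_self_eq_norm_sq (𝕜 := ℂ) u
    have him : (⟪u, u⟫_ℂ).im = 0 := inner_self_im (𝕜 := ℂ) u
    simp only [← Complex.ofReal_inv, ← Complex.ofReal_mul, Complex.conj_ofReal,
      Complex.add_re, Complex.mul_re, Complex.sub_re, Complex.sub_im,
      RCLike.conj_ofReal, Complex.ofReal_re, Complex.ofReal_im, hself, him]
    ring
  have ha : -(‖r‖ * ‖u‖) ≤ (⟪r, u⟫_ℂ).re := by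
    have h1 : ‖⟪r, u⟫_ℂ‖ ≤ ‖r‖ * ‖u‖ := norm_inner_le_norm r u
    have h2 : |(⟪r, u⟫_ℂ).re| ≤ ‖⟪r, u⟫_ℂ‖ := Complex.abs_re_le_norm _
    have h3 := neg_abs_le (⟪r, u⟫_ℂ).re
    linarith
  have hkey : ε * ‖u‖ ^ 2 ≤ δ₀ * ‖u‖ ^ 2 - (M - δ₀) * (‖r‖ * ‖u‖) := by
    have htri : ‖r - u‖ ≤ ‖r‖ + ‖u‖ := norm_sub_le _ _
    rcases max_cases δ₀ ‖r - u‖ with ⟨h1, h2⟩ | ⟨h1, h2⟩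
    · rw [hMdef, h1]
      nlinarith [norm_nonneg u, norm_nonneg r]
    · rw [hMdef, h1]
      nlinarith [norm_nonneg u, norm_nonneg r,
        mul_nonneg (norm_nonneg u) (norm_nonneg r),
        sq_nonneg (‖u‖ - ‖r‖), sq_nonneg ‖u‖]
  have hstep : ε * ‖u‖ ^ 2 / M
      ≤ (δ₀ * ‖u‖ ^ 2 - (M - δ₀) * (‖r‖ * ‖u‖)) / M :=
    (div_le_div_iff_of_pos_right hMpos).mpr hkey
  have heq : (δ₀ * ‖u‖ ^ 2 - (M - δ₀) * (‖r‖ * ‖u‖)) / M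
      = (δ₀ / M) * ‖u‖ ^ 2 + (1 - δ₀ / M) * (-(‖r‖ * ‖u‖)) := by
    field_simp
    ring
  have hcoef : 0 ≤ 1 - δ₀ / M := by
    have : δ₀ / M ≤ 1 := (div_le_one hMpos).mpr hM
    linarith
  calc ε * ‖u‖ ^ 2 / M
      ≤ (δ₀ / M) * ‖u‖ ^ 2 + (1 - δ₀ / M) * (-(‖r‖ * ‖u‖)) := by
        rw [← heq]; exact hstep
    _ ≤ (δ₀ / M) * ‖u‖ ^ 2 + (1 - δ₀ / M) * (⟪r, u⟫_ℂ).re := by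
        gcongr
    _ = (⟪φ u, u⟫_ℂ).re := hre.symm
end

section
/- Let U be a complex Hilbert space, δ₀ > 0, r ∈ U with ‖r‖ < δ₀, and φ(u) = r + (δ₀/max{δ₀, ‖u − r‖})·(u − r). Then there exist constants α, β, γ > 0 such that Re⟨φ(u), u⟩ ≥ α‖u‖² whenever ‖u‖ < γ, and Re⟨φ(u), u⟩ ≥ β whenever ‖u‖ ≥ γ. -/
/-!
Writing `φ u = c • u + (1 - c) • r` with `c = δ₀ / max δ₀ ‖u - r‖ ∈ (0, 1]`, Cauchy–Schwarz gives
`Re⟨φ u, u⟩ ≥ ‖u‖ (c (‖u‖ + ‖r‖) - ‖r‖)`. Near the origin `‖u - r‖ ≤ δ₀`, so `c = 1` and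
`Re⟨φ u, u⟩ = ‖u‖²`. Away from it, `‖u‖ + ‖r‖` dominates both `δ₀` and `‖u - r‖`, so
`c (‖u‖ + ‖r‖) ≥ δ₀` and `Re⟨φ u, u⟩ ≥ ‖u‖ (δ₀ - ‖r‖) ≥ (δ₀ - ‖r‖)²`; take `γ = δ₀ - ‖r‖`.
-/

open scoped InnerProductSpace

theorem neg_norm_mul_norm_le_re_inner {𝕜 U : Type*} [RCLike 𝕜] [SeminormedAddCommGroup U]
    [InnerProductSpace 𝕜 U] (x y : U) : -(‖x‖ * ‖y‖) ≤ RCLike.re ⟪x, y⟫_𝕜 := by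
  have h := re_inner_le_norm (𝕜 := 𝕜) (-x) y
  rw [inner_neg_left, map_neg, norm_neg] at h
  linarith

theorem norm_mul_sub_le_re_inner_add_smul_sub {𝕜 U : Type*} [RCLike 𝕜]
    [SeminormedAddCommGroup U] [InnerProductSpace 𝕜 U] [Module ℝ U] [IsScalarTower ℝ 𝕜 U]
    (r u : U) {c : ℝ} (hc : c ≤ 1) :
    ‖u‖ * (c * (‖u‖ + ‖r‖) - ‖r‖) ≤ RCLike.re ⟪r + c • (u - r), u⟫_𝕜 := by
  have hsplit : r + c • (u - r) = (c : 𝕜) • u + ((1 - c : ℝ) : 𝕜) • r := by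
    simp only [← RCLike.real_smul_eq_coe_smul, smul_sub, sub_smul, one_smul]
    abel
  have hr := mul_le_mul_of_nonneg_left (neg_norm_mul_norm_le_re_inner (𝕜 := 𝕜) r u)
    (sub_nonneg.2 hc)
  rw [hsplit, inner_add_left, inner_smul_real_left, inner_smul_real_left, map_add,
    RCLike.smul_re, RCLike.smul_re, inner_self_eq_norm_sq]
  nlinarith

theorem le_div_max_norm_sub_mul {U : Type*} [SeminormedAddCommGroup U] {δ : ℝ} (hδ : 0 < δ)
    (r u : U) (h : δ ≤ ‖u‖ + ‖r‖) : δ ≤ δ / max δ ‖u - r‖ * (‖u‖ + ‖r‖) := by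
  rw [div_mul_eq_mul_div, le_div_iff₀ (lt_max_of_lt_left hδ)]
  exact mul_le_mul_of_nonneg_left (max_le h (norm_sub_le u r)) hδ.le

/-- For the shifted saturation function `φ` centered at `r` with `‖r‖ < δ₀`,
there exist `α, β, γ > 0` with `Re⟨φ(u), u⟩ ≥ α‖u‖²` for `‖u‖ < γ`
and `Re⟨φ(u), u⟩ ≥ β` for `‖u‖ ≥ γ`. -/
theorem shifted_saturation_sector_bounds
    {U : Type*} [NormedAddCommGroup U] [InnerProductSpace ℂ U]
    (δ₀ : ℝ) (hδ₀ : 0 < δ₀) (r : U) (hr : ‖r‖ < δ₀)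
    (φ : U → U)
    (hφ : ∀ u : U, φ u = r + (δ₀ / max δ₀ ‖u - r‖) • (u - r)) :
    ∃ α β γ : ℝ, 0 < α ∧ 0 < β ∧ 0 < γ ∧
      (∀ u : U, ‖u‖ < γ → α * ‖u‖ ^ 2 ≤ (⟪φ u, u⟫_ℂ).re) ∧
      (∀ u : U, γ ≤ ‖u‖ → β ≤ (⟪φ u, u⟫_ℂ).re) := by
  have hγ : 0 < δ₀ - ‖r‖ := sub_pos.2 hr
  refine ⟨1, (δ₀ - ‖r‖) ^ 2, δ₀ - ‖r‖, one_pos, by positivity, hγ,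
    fun u hu => ?_, fun u hu => ?_⟩
  · have hscale : δ₀ / max δ₀ ‖u - r‖ = 1 := by
      rw [max_eq_left (by linarith [norm_sub_le u r]), div_self hδ₀.ne']
    rw [hφ, hscale, one_smul, add_sub_cancel, one_mul, ← RCLike.re_to_complex]
    exact (inner_self_eq_norm_sq u).ge
  · set c := δ₀ / max δ₀ ‖u - r‖
    have hc : c ≤ 1 := div_le_one_of_le₀ (le_max_left _ _) (hδ₀.le.trans (le_max_left _ _))
    have hsat : δ₀ ≤ c * (‖u‖ + ‖r‖) := le_div_max_norm_sub_mul hδ₀ r u (by linarith)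
    rw [hφ, ← RCLike.re_to_complex]
    calc (δ₀ - ‖r‖) ^ 2 ≤ ‖u‖ * (δ₀ - ‖r‖) := by nlinarith
      _ ≤ ‖u‖ * (c * (‖u‖ + ‖r‖) - ‖r‖) :=
        mul_le_mul_of_nonneg_left (by linarith) (norm_nonneg u)
      _ ≤ _ := norm_mul_sub_le_re_inner_add_smul_sub r u hc
end
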